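/- In the prefix-routing model on a complete k-ary hierarchy of depth d, if every peer at leaf λ knows, for each level l ≤ d and each symbol c ≠ λ(l), some peer whose leaf name agrees with λ on the first l−1 symbols and has c as its l-th symbol (when such a peer exists), then for any target leaf μ containing at least one peer, greedy forwarding—at each step forwarding to a known peer whose leaf name shares a strictly longer common prefix with μ—reaches a peer in μ in at most d hops. -/

import Mathlib

/-! The common prefix length with `mu` is at most `d`, equals `d` only at `mu` itself, and the
target peer witnesses that a longer prefix exists; so every greedy hop raises this potential
by at least one, and `d` hops suffice. -/

open Classical in
/-- The common prefix length of a leaf name `lam` with the target leaf `mu`: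
the largest `l ≤ d` such that `lam` and `mu` agree on all positions `i < l`. -/
noncomputable def cpl {k d : ℕ} (mu lam : Fin d → Fin k) : ℕ :=
  Nat.findGreatest (fun l => ∀ i : Fin d, (i : ℕ) < l → lam i = mu i) d

/-- `ReachN step n p q`: `q` is reachable from `p` in exactly `n` forwarding
hops of the relation `step`. -/
inductive ReachN {P : Type*} (step : P → P → Prop) : ℕ → P → P → Prop
  | refl (p : P) : ReachN step 0 p p
  | tail {n : ℕ} {p q r : P} : ReachN step n p q → step q r → ReachN step (n + 1) p r

section cpl

variable {k d : ℕ} {mu lam : Fin d → Fin k}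

theorem cpl_le : cpl mu lam ≤ d :=
  Nat.findGreatest_le d

theorem cpl_self : cpl mu mu = d :=
  cpl_le.antisymm (Nat.le_findGreatest le_rfl fun _ _ => rfl)

theorem eq_of_cpl_eq (h : cpl mu lam = d) : lam = mu :=
  funext fun i => (Nat.findGreatest_eq_iff.1 h).2.1 (Fin.pos i).ne' i i.isLt

end cpl

namespace ReachN

variable {P : Type*} {step : P → P → Prop}

theorem head {n : ℕ} {p q r : P} (h : ReachN step n q r) (hs : step p q) :
    ReachN step (n + 1) p r := by
  induction h with
  | refl => exact .tail (.refl p) hs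
  | tail _ hqr ih => exact .tail (ih hs) hqr

theorem exists_of_forall_exists_step_lt (f : P → ℕ) (N : ℕ)
    (hprog : ∀ p, f p < N → ∃ q, step p q ∧ f p < f q) (p₀ : P) :
    ∃ n ≤ N - f p₀, ∃ p, ReachN step n p₀ p ∧ N ≤ f p := by
  rcases lt_or_ge (f p₀) N with hlt | hge
  · obtain ⟨q, hstep, hq⟩ := hprog p₀ hlt
    obtain ⟨n, hn, p, hreach, hp⟩ := exists_of_forall_exists_step_lt f N hprog q
    exact ⟨n + 1, by omega, p, hreach.head hstep, hp⟩
  · exact ⟨0, Nat.zero_le _, p₀, .refl p₀, hge⟩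
termination_by N - f p₀

end ReachN

/-- In the prefix-routing model on a complete k-ary hierarchy of
depth `d`, suppose that from any peer whose leaf name shares a common prefix of
length `< d` with the target leaf `mu`, whenever some peer with a strictly
longer common prefix exists, a one-hop forwarding to a known peer with a
strictly longer common prefix is possible; and suppose the target leaf `mu` is
occupied. Then greedy forwarding from any peer reaches a peer located at `mu`
in at most `d` hops. -/
theorem stmt14 {k d : ℕ} (Peer : Type*) (loc : Peer → (Fin d → Fin k))
    (mu : Fin d → Fin k) (step : Peer → Peer → Prop)
    (hstep : ∀ p : Peer, cpl mu (loc p) < d →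
      (∃ q : Peer, cpl mu (loc p) + 1 ≤ cpl mu (loc q)) →
      ∃ p' : Peer, step p p' ∧ cpl mu (loc p) + 1 ≤ cpl mu (loc p'))
    (htarget : ∃ q : Peer, loc q = mu) :
    ∀ p₀ : Peer, ∃ n ≤ d, ∃ p : Peer, ReachN step n p₀ p ∧ loc p = mu := by
  obtain ⟨t, ht⟩ := htarget
  have hprog : ∀ p, cpl mu (loc p) < d → ∃ q, step p q ∧ cpl mu (loc p) < cpl mu (loc q) :=
    fun p hlt => hstep p hlt ⟨t, by rw [ht, cpl_self]; exact hlt⟩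
  intro p₀
  obtain ⟨n, hn, p, hreach, hp⟩ :=
    ReachN.exists_of_forall_exists_step_lt (fun p => cpl mu (loc p)) d hprog p₀
  exact ⟨n, hn.trans (Nat.sub_le _ _), p, hreach, eq_of_cpl_eq (cpl_le.antisymm hp)⟩
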